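/- For any divisor D on a smooth projective curve and any sequence of divisors A_0, ..., A_n with A_i = A_{i-1} + P_i (P_i rational points), deg D >= |{i : A_i ∈ Γ_{P_i} and A_i - D ∉ Γ_{P_i}}| - |{i : A_i ∉ Γ_{P_i} and A_i - D ∈ Γ_{P_i}}|, provided D is effective. -/

import Mathlib

noncomputable section

/-- Degree of a divisor, where divisors on the curve are modeled as finitely
supported integer valued functions on the set of rational points. -/
def degr {Point : Type*} (D : Point →₀ ℤ) : ℤ := D.sum fun _ n => n

/-- An abstract model of a smooth projective absolutely irreducible curve over a field,
recording the data used in the paper: the dimension `l D` of the Riemann-Roch space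
`L(D)`, the genus `g`, a canonical divisor `K`, and linear equivalence `lin`,
together with their basic properties (Riemann-Roch, monotonicity, semigroup
properties of nongaps, etc.). -/
structure Curve (Point : Type*) where
  /-- `l D = dim L(D)` -/
  l : (Point →₀ ℤ) → ℕ
  /-- the genus -/
  g : ℕ
  /-- a canonical divisor -/
  K : Point →₀ ℤ
  /-- linear equivalence of divisors -/
  lin : (Point →₀ ℤ) → (Point →₀ ℤ) → Prop
  lin_refl : ∀ A, lin A A
  lin_symm : ∀ {A B}, lin A B → lin B A
  lin_trans : ∀ {A B C}, lin A B → lin B C → lin A C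
  lin_add : ∀ {A B} (E : Point →₀ ℤ), lin A B → lin (A + E) (B + E)
  deg_lin : ∀ {A B}, lin A B → degr A = degr B
  l_lin : ∀ {A B}, lin A B → l A = l B
  l_zero : l 0 = 1
  l_neg : ∀ {D}, degr D < 0 → l D = 0
  l_mono : ∀ (D : Point →₀ ℤ) (P : Point), l D ≤ l (D + Finsupp.single P 1)
  l_step : ∀ (D : Point →₀ ℤ) (P : Point), l (D + Finsupp.single P 1) ≤ l D + 1
  /-- Riemann-Roch -/
  rr : ∀ D : Point →₀ ℤ, (l D : ℤ) - l (K - D) = degr D + 1 - g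
  lin_of_deg_zero : ∀ {D}, l D ≠ 0 → degr D = 0 → lin D 0
  /-- the semigroup property of `Γ_P` -/
  gamma_add : ∀ (P : Point) {A B}, l A ≠ l (A - Finsupp.single P 1) →
      l B ≠ l (B - Finsupp.single P 1) → l (A + B) ≠ l (A + B - Finsupp.single P 1)
  eff_add : ∀ {A B}, l A ≠ 0 → l B ≠ 0 → l (A + B) ≠ 0
  point_nongap : ∀ {P Q : Point}, P ≠ Q →
      l (Finsupp.single P 1) ≠ l (Finsupp.single P 1 - Finsupp.single Q 1)

variable {Point : Type*}

/-- `Γ_P` : divisor (classes) with no base point at `P`, i.e. `L(A) ≠ L(A-P)`. -/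
def GammaP (X : Curve Point) (P : Point) : Set (Point →₀ ℤ) :=
  {A | X.l A ≠ X.l (A - Finsupp.single P 1)}

/-- `Γ_S = ∩_{P ∈ S} Γ_P`, with the convention `Γ_∅ = Γ = {A : L(A) ≠ 0}`. -/
def GammaS (X : Curve Point) (S : Finset Point) : Set (Point →₀ ℤ) :=
  {A | (S = ∅ → X.l A ≠ 0) ∧ ∀ P ∈ S, A ∈ GammaP X P}

/-- `Γ(C; S, S') = {A : A ∈ Γ_S and A - C ∈ Γ_{S'}}`. -/
def GammaSet (X : Curve Point) (C : Point →₀ ℤ) (S S' : Finset Point) :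
    Set (Point →₀ ℤ) :=
  {A | A ∈ GammaS X S ∧ A - C ∈ GammaS X S'}

/-- `γ(C; S, S') = min {deg A : A ∈ Γ(C; S, S')}`. -/
def gammaMin (X : Curve Point) (C : Point →₀ ℤ) (S S' : Finset Point) : ℤ :=
  sInf (degr '' GammaSet X C S S')

/-- `Δ = {i : A_i ∈ Γ_{P_i} and A_i - C ∉ Γ_{P_i}}` for indices `1 ≤ i ≤ n`. -/
def Delta (X : Curve Point) (C : Point →₀ ℤ) (n : ℕ) (A : ℕ → Point →₀ ℤ)
    (P : ℕ → Point) : Set ℕ :=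
  {i | 1 ≤ i ∧ i ≤ n ∧ A i ∈ GammaP X (P i) ∧ A i - C ∉ GammaP X (P i)}

/-- `Δ' = {i : A_i ∉ Γ_{P_i} and A_i - C ∈ Γ_{P_i}}` for indices `1 ≤ i ≤ n`. -/
def Delta' (X : Curve Point) (C : Point →₀ ℤ) (n : ℕ) (A : ℕ → Point →₀ ℤ)
    (P : ℕ → Point) : Set ℕ :=
  {i | 1 ≤ i ∧ i ≤ n ∧ A i ∉ GammaP X (P i) ∧ A i - C ∈ GammaP X (P i)}

/-!
`A + P ∈ Γ_P` says exactly that `l` grows when passing from `A` to `A + P`, and it grows by at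
most one. Summing along the chain, `#{i : A_i ∈ Γ_{P_i}} = l(A_n) - l(A_0)`, and the same holds
for the shifted chain `A_i - D`; hence `#Δ - #Δ' = (l(A_n) - l(A_0)) - (l(A_n - D) - l(A_0 - D))`.
As `D` is effective, `l(A_0 - D) ≤ l(A_0)` and `l(A_n) ≤ l(A_n - D) + deg D`.
-/

lemma Finset.card_filter_and_not_sub_card_filter_not_and {α : Type*} (s : Finset α)
    (p q : α → Prop) [DecidablePred p] [DecidablePred q] :
    ((s.filter fun a => p a ∧ ¬q a).card : ℤ) - (s.filter fun a => ¬p a ∧ q a).card =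
      (s.filter p).card - (s.filter q).card := by
  simp only [Finset.card_filter, Nat.cast_sum, ← Finset.sum_sub_distrib]
  refine Finset.sum_congr rfl fun a _ => ?_
  by_cases p a <;> by_cases q a <;> simp [*]

lemma ncard_setOf_mem_Icc_and (n : ℕ) (p : ℕ → Prop) [DecidablePred p] :
    {i | 1 ≤ i ∧ i ≤ n ∧ p i}.ncard = ((Finset.Icc 1 n).filter p).card := by
  rw [← Set.ncard_coe_finset]
  congr 1
  ext i
  simp [and_assoc]

theorem Finsupp.nonneg_induction {motive : (E : Point →₀ ℤ) → 0 ≤ E → Prop}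
    (zero : motive 0 le_rfl)
    (add_single : ∀ E p (hE : 0 ≤ E), motive E hE →
      motive (E + Finsupp.single p 1) (add_nonneg hE (Finsupp.single_nonneg.2 zero_le_one)))
    (E : Point →₀ ℤ) (hE : 0 ≤ E) : motive E hE := by
  classical
  obtain ⟨s, rfl⟩ : ∃ s : Multiset Point,
      (Multiset.toFinsupp s).mapRange ((↑) : ℕ → ℤ) Nat.cast_zero = E := by
    refine ⟨Multiset.toFinsupp.symm (E.mapRange Int.toNat rfl), ?_⟩
    ext x
    simpa using hE x
  induction s using Multiset.induction_on with
  | empty => simpa using zero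
  | cons p s ih =>
    have hs : 0 ≤ (Multiset.toFinsupp s).mapRange ((↑) : ℕ → ℤ) Nat.cast_zero := fun x => by simp
    convert add_single _ p hs (ih hs) using 1
    rw [← Multiset.singleton_add, add_comm, Multiset.toFinsupp_add, Multiset.toFinsupp_singleton,
      Finsupp.mapRange_add (by simp), Finsupp.mapRange_single, Nat.cast_one]

lemma degr_add (A B : Point →₀ ℤ) : degr (A + B) = degr A + degr B :=
  Finsupp.sum_add_index' (fun _ => rfl) fun _ _ _ => rfl

lemma degr_single (p : Point) : degr (Finsupp.single p 1) = 1 :=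
  Finsupp.sum_single_index rfl

namespace Curve

variable (X : Curve Point)

lemma l_le_l_add_of_nonneg {E : Point →₀ ℤ} (hE : 0 ≤ E) (A : Point →₀ ℤ) :
    X.l A ≤ X.l (A + E) := by
  induction E, hE using Finsupp.nonneg_induction generalizing A with
  | zero => simp
  | add_single E p _ ih => rw [← add_assoc]; exact (ih A).trans (X.l_mono _ p)

lemma l_add_le_of_nonneg {E : Point →₀ ℤ} (hE : 0 ≤ E) (A : Point →₀ ℤ) :
    (X.l (A + E) : ℤ) ≤ X.l A + degr E := by
  induction E, hE using Finsupp.nonneg_induction generalizing A with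
  | zero => simp [degr]
  | add_single E p _ ih =>
    rw [← add_assoc, degr_add, degr_single]
    linarith [ih A, X.l_step (A + E) p]

open Classical in
lemma l_add_single_sub_l_eq_ite (B : Point →₀ ℤ) (p : Point) :
    (X.l (B + Finsupp.single p 1) : ℤ) - X.l B =
      if B + Finsupp.single p 1 ∈ GammaP X p then 1 else 0 := by
  have h₁ := X.l_mono B p
  have h₂ := X.l_step B p
  simp only [GammaP, Set.mem_ofPred_eq, add_sub_cancel_right]
  split_ifs <;> omega

open Classical in
lemma card_filter_mem_gammaP (A : ℕ → Point →₀ ℤ) (P : ℕ → Point) (n : ℕ)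
    (hA : ∀ i, 1 ≤ i → i ≤ n → A i = A (i - 1) + Finsupp.single (P i) 1) :
    (((Finset.Icc 1 n).filter fun i => A i ∈ GammaP X (P i)).card : ℤ) =
      X.l (A n) - X.l (A 0) := by
  rw [Finset.card_filter, Nat.cast_sum]
  induction n with
  | zero => simp
  | succ n ih =>
    rw [Finset.sum_Icc_succ_top (by omega), ih fun i h₁ h₂ => hA i h₁ (by omega),
      hA (n + 1) le_add_self le_rfl, Nat.add_sub_cancel]
    push_cast
    rw [← X.l_add_single_sub_l_eq_ite]
    ring

end Curve

/-- For any effective divisor `D` and any sequence of divisors `A_0, ..., A_n` with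
`A_i = A_{i-1} + P_i` (`P_i` rational points),
`deg D ≥ |{i : A_i ∈ Γ_{P_i} and A_i - D ∉ Γ_{P_i}}| - |{i : A_i ∉ Γ_{P_i} and A_i - D ∈ Γ_{P_i}}|`. -/
theorem deg_ge_delta_diff (X : Curve Point) (D : Point →₀ ℤ) (hD : 0 ≤ D)
    (n : ℕ) (A : ℕ → Point →₀ ℤ) (P : ℕ → Point)
    (hA : ∀ i, 1 ≤ i → i ≤ n → A i = A (i - 1) + Finsupp.single (P i) 1) :
    ((Delta X D n A P).ncard : ℤ) - ((Delta' X D n A P).ncard : ℤ) ≤ degr D := by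
  classical
  have hAD : ∀ i, 1 ≤ i → i ≤ n → A i - D = (A (i - 1) - D) + Finsupp.single (P i) 1 :=
    fun i h₁ h₂ => by rw [hA i h₁ h₂]; abel
  rw [Delta, Delta', ncard_setOf_mem_Icc_and, ncard_setOf_mem_Icc_and,
    Finset.card_filter_and_not_sub_card_filter_not_and, X.card_filter_mem_gammaP A P n hA,
    X.card_filter_mem_gammaP (fun i => A i - D) P n hAD]
  have h₀ := X.l_le_l_add_of_nonneg hD (A 0 - D)
  have hₙ := X.l_add_le_of_nonneg hD (A n - D)
  rw [sub_add_cancel] at h₀ hₙ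
  omega
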